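/- arXiv:2112.02928 — 5 statements merged into one kernel-verified Lean document; each statement's English description precedes it below -/
import Mathlib

section
/- Let p > 0, ν ∈ ℂ, and x > 0. Then the function t ↦ t^(ν−1) · exp(−t^p − x/t) is integrable on (0, ∞), i.e. Krätzel's integral F_{p,ν}(x) is an absolutely convergent integral. -/
open MeasureTheory Set

/-!
Since `exp (-y) ≤ n! / y ^ n` for `y > 0`, the factor `exp (-x / t)` is at most `n! x⁻ⁿ tⁿ`,
which trades the singularity of `t ^ (ν - 1)` at the origin for the power `t ^ (Re ν - 1 + n)`.
For `n > -Re ν` the integrand is then dominated by a multiple of `t ^ a * exp (-t ^ p)`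
with `a > -1`, which is integrable on `(0, ∞)` by the substitution `u = t ^ p` into the
Gamma integral.
-/

theorem Real.exp_neg_le_factorial_div_pow {y : ℝ} (hy : 0 < y) (n : ℕ) :
    Real.exp (-y) ≤ n.factorial / y ^ n := by
  rw [Real.exp_neg, inv_le_comm₀ (Real.exp_pos y) (by positivity), inv_div]
  exact Real.pow_div_factorial_le_exp (x := y) hy.le n

namespace Kratzel

noncomputable def integrand (p : ℝ) (ν : ℂ) (x t : ℝ) : ℂ :=
  (t : ℂ) ^ (ν - 1) * Complex.exp (-((t ^ p : ℝ) : ℂ) - ((x / t : ℝ) : ℂ))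

theorem continuousOn_integrand (p : ℝ) (ν : ℂ) (x : ℝ) :
    ContinuousOn (integrand p ν x) (Ioi 0) := by
  intro t (ht : 0 < t)
  refine ContinuousAt.continuousWithinAt (ContinuousAt.mul ?_ ?_)
  · exact Complex.continuousAt_ofReal_cpow_const t (ν - 1) (Or.inr ht.ne')
  · have := Complex.continuous_ofReal
    fun_prop (disch := simp [ht.ne'])

theorem norm_integrand {p : ℝ} {ν : ℂ} {x t : ℝ} (ht : 0 < t) :
    ‖integrand p ν x t‖ = t ^ (ν.re - 1) * (Real.exp (-t ^ p) * Real.exp (-(x / t))) := by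
  rw [integrand, norm_mul, Complex.norm_cpow_eq_rpow_re_of_pos ht, Complex.norm_exp,
    ← Real.exp_add]
  simp [sub_eq_add_neg]

theorem norm_integrand_le {p : ℝ} {ν : ℂ} {x t : ℝ} (hx : 0 < x) (ht : 0 < t) (n : ℕ) :
    ‖integrand p ν x t‖ ≤ n.factorial / x ^ n * (t ^ (ν.re - 1 + n) * Real.exp (-t ^ p)) := by
  calc ‖integrand p ν x t‖
      ≤ t ^ (ν.re - 1) * (Real.exp (-t ^ p) * (n.factorial / (x / t) ^ n)) := by
        rw [norm_integrand ht]
        gcongr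
        exact Real.exp_neg_le_factorial_div_pow (div_pos hx ht) n
    _ = n.factorial / x ^ n * (t ^ (ν.re - 1 + n) * Real.exp (-t ^ p)) := by
        rw [Real.rpow_add_natCast ht.ne', div_pow]
        field_simp

end Kratzel

/-- Krätzel's integral: for `p > 0`, `ν ∈ ℂ` and `x > 0`, the integrand
`t ↦ t^(ν-1) · exp(-t^p - x/t)` is integrable on `(0, ∞)`. -/
theorem kratzel_integrable (p : ℝ) (hp : 0 < p) (ν : ℂ) (x : ℝ) (hx : 0 < x) :
    IntegrableOn
      (fun t : ℝ => (t : ℂ) ^ (ν - 1) * Complex.exp (-((t ^ p : ℝ) : ℂ) - ((x / t : ℝ) : ℂ)))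
      (Ioi 0) := by
  obtain ⟨n, hn⟩ : ∃ n : ℕ, -ν.re < n := exists_nat_gt _
  have hdominant : IntegrableOn
      (fun t => n.factorial / x ^ n * (t ^ (ν.re - 1 + n) * Real.exp (-t ^ p))) (Ioi 0) :=
    (integrableOn_rpow_mul_exp_neg_rpow (by linarith) hp).const_mul _
  refine hdominant.mono'
    ((Kratzel.continuousOn_integrand p ν x).aestronglyMeasurable measurableSet_Ioi) ?_
  filter_upwards [ae_restrict_mem measurableSet_Ioi] with t ht
  exact Kratzel.norm_integrand_le hx ht n
end

section
/- Let p > 0 and ν ∈ ℂ, and set ψ(τ) = τ^p / p + 1/τ for τ > 0. Then for every complex X with Re(X) > 0 the function τ ↦ τ^(ν−1) exp(−X ψ(τ)) is integrable on (0, ∞), and the function G(X) = ∫₀^∞ τ^(ν−1) exp(−X ψ(τ)) dτ is holomorphic (complex differentiable) on the half-plane {X ∈ ℂ : Re(X) > 0}. -/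
/-!
For `Re X ≥ c > 0` the factor `exp (-X ψ τ)` is bounded by `exp (-c τ ^ p / p)` and by
`exp (-c / τ)`, so it decays faster than any power of `τ` both at `∞` and at `0⁺`, and its Mellin
transform at `ν` converges. Holomorphy then comes from differentiating under the integral sign:
since `ψ ≥ 0` and `t e^{-2ct} ≤ c⁻¹ e^{-ct}`, the `X`-derivative `-ψ τ^(ν-1) e^{-Xψ}` is dominated,
uniformly for `X` near `X₀`, by the integrable `c⁻¹ |τ^(ν-1)| e^{-cψ}` with `c = Re X₀ / 4`.
-/

open MeasureTheory Set Filter Topology Asymptotics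

theorem Real.mul_exp_neg_mul_le {δ : ℝ} (hδ : 0 < δ) (c t : ℝ) :
    t * Real.exp (-(c + δ) * t) ≤ δ⁻¹ * Real.exp (-c * t) := by
  have ht : t ≤ δ⁻¹ * Real.exp (δ * t) := by
    rw [le_inv_mul_iff₀ hδ]
    linarith [Real.add_one_le_exp (δ * t)]
  calc t * Real.exp (-(c + δ) * t) ≤ δ⁻¹ * Real.exp (δ * t) * Real.exp (-(c + δ) * t) :=
        mul_le_mul_of_nonneg_right ht (Real.exp_pos _).le
    _ = δ⁻¹ * Real.exp (-c * t) := by rw [mul_assoc, ← Real.exp_add]; ring_nf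

theorem Complex.norm_exp_neg_mul_ofReal (X : ℂ) (r : ℝ) :
    ‖Complex.exp (-X * r)‖ = Real.exp (-X.re * r) := by
  simp [Complex.norm_exp, Complex.mul_re]

theorem Real.exp_neg_mul_rpow_isLittleO_rpow_atTop {c p : ℝ} (hc : 0 < c) (hp : 0 < p) (a : ℝ) :
    (fun t => Real.exp (-c * t ^ p)) =o[atTop] (· ^ a) := by
  refine ((isLittleO_exp_neg_mul_rpow_atTop hc (a / p)).comp_tendsto
    (tendsto_rpow_atTop hp)).congr' EventuallyEq.rfl ?_
  filter_upwards [eventually_ge_atTop 0] with t ht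
  simp only [Function.comp_apply, ← Real.rpow_mul ht, mul_div_cancel₀ a hp.ne']

theorem Real.exp_neg_mul_inv_isLittleO_rpow_nhdsGT_zero {c : ℝ} (hc : 0 < c) (b : ℝ) :
    (fun t => Real.exp (-c * t⁻¹)) =o[𝓝[>] 0] (· ^ b) := by
  refine ((isLittleO_exp_neg_mul_rpow_atTop hc (-b)).comp_tendsto
    tendsto_inv_nhdsGT_zero).congr' EventuallyEq.rfl ?_
  filter_upwards [self_mem_nhdsWithin] with t ht
  simp only [Function.comp_apply, Real.inv_rpow ht.le, Real.rpow_neg ht.le, inv_inv]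

section LaplaceType

variable {α : Type*} [MeasurableSpace α] {μ : Measure α} {g : α → ℂ} {ψ : α → ℝ}

theorem hasDerivAt_integral_mul_cexp_neg_mul (hψm : AEMeasurable ψ μ) (hψ : ∀ᵐ x ∂μ, 0 ≤ ψ x)
    (hint : ∀ X : ℂ, 0 < X.re → Integrable (fun x => g x * Complex.exp (-X * ψ x)) μ)
    {X₀ : ℂ} (hX₀ : 0 < X₀.re) :
    HasDerivAt (fun X => ∫ x, g x * Complex.exp (-X * ψ x) ∂μ)
      (∫ x, g x * (Complex.exp (-X₀ * ψ x) * -ψ x) ∂μ) X₀ := by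
  set c := X₀.re / 4 with hc
  have hc0 : 0 < c := by positivity
  have hball : ∀ X ∈ Metric.ball X₀ (2 * c), c + c ≤ X.re := by
    intro X hX
    have := (abs_lt.1 ((Complex.abs_re_le_norm (X - X₀)).trans_lt (mem_ball_iff_norm.1 hX))).1
    rw [Complex.sub_re] at this
    linarith
  have hψm' : AEStronglyMeasurable (fun x => (ψ x : ℂ)) μ :=
    (Complex.measurable_ofReal.comp_aemeasurable hψm).aestronglyMeasurable
  refine (hasDerivAt_integral_of_dominated_loc_of_deriv_le
    (F := fun X x => g x * Complex.exp (-X * ψ x))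
    (F' := fun X x => g x * (Complex.exp (-X * ψ x) * -ψ x))
    (bound := fun x => c⁻¹ * ‖g x * Complex.exp (-(c : ℂ) * ψ x)‖)
    (Metric.ball_mem_nhds X₀ (by positivity : 0 < 2 * c))
    (Eventually.of_forall fun X => ?_) (hint X₀ hX₀)
    (((hint X₀ hX₀).aestronglyMeasurable.mul hψm'.neg).congr
      (ae_of_all _ fun _ => mul_assoc _ _ _))
    ?_ ((hint c (by simpa using hc0)).norm.const_mul _) ?_).2
  · have hexp : AEStronglyMeasurable (fun x => Complex.exp (-(X - X₀) * ψ x)) μ :=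
      Complex.continuous_exp.comp_aestronglyMeasurable (aestronglyMeasurable_const.mul hψm')
    refine ((hint X₀ hX₀).aestronglyMeasurable.mul hexp).congr (ae_of_all _ fun x => ?_)
    simp only [Pi.mul_apply, mul_assoc, ← Complex.exp_add]
    ring_nf
  · filter_upwards [hψ] with x hx X hX
    rw [norm_mul, norm_mul, norm_mul, norm_neg, Complex.norm_exp_neg_mul_ofReal,
      Complex.norm_exp_neg_mul_ofReal, Complex.norm_real, Real.norm_of_nonneg hx,
      Complex.ofReal_re, mul_left_comm c⁻¹]
    refine mul_le_mul_of_nonneg_left ?_ (norm_nonneg _)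
    calc Real.exp (-X.re * ψ x) * ψ x ≤ ψ x * Real.exp (-(c + c) * ψ x) := by
          rw [mul_comm]
          gcongr
          linarith [hball X hX]
      _ ≤ c⁻¹ * Real.exp (-c * ψ x) := Real.mul_exp_neg_mul_le hc0 c (ψ x)
  · refine Eventually.of_forall fun x X _ => ?_
    simpa using (((hasDerivAt_id X).neg.mul_const (ψ x : ℂ)).cexp).const_mul (g x)

end LaplaceType

noncomputable def kratzelPhase (p τ : ℝ) : ℝ := τ ^ p / p + 1 / τ

section KratzelPhase

variable {p : ℝ}

theorem kratzelPhase_pos (hp : 0 < p) {τ : ℝ} (hτ : 0 < τ) : 0 < kratzelPhase p τ := by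
  unfold kratzelPhase; positivity

theorem continuousOn_kratzelPhase (p : ℝ) : ContinuousOn (kratzelPhase p) (Ioi 0) := by
  intro τ hτ
  have hτ : τ ≠ 0 := ne_of_gt hτ
  exact (((Real.continuousAt_rpow_const τ p (Or.inl hτ)).div_const p).add
    (continuousAt_const.div continuousAt_id hτ)).continuousWithinAt

theorem exp_neg_mul_kratzelPhase_le_rpow {c τ : ℝ} (hc : 0 ≤ c) (hτ : 0 < τ) :
    Real.exp (-c * kratzelPhase p τ) ≤ Real.exp (-(c / p) * τ ^ p) := by
  have : 0 ≤ c * (1 / τ) := by positivity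
  rw [Real.exp_le_exp, kratzelPhase]
  linarith [show -(c / p) * τ ^ p = -c * (τ ^ p / p) by ring]

theorem exp_neg_mul_kratzelPhase_le_inv (hp : 0 < p) {c τ : ℝ} (hc : 0 ≤ c) (hτ : 0 < τ) :
    Real.exp (-c * kratzelPhase p τ) ≤ Real.exp (-c * τ⁻¹) := by
  have : 0 ≤ c * (τ ^ p / p) := by positivity
  rw [Real.exp_le_exp, kratzelPhase, one_div]
  linarith

theorem cexp_neg_mul_kratzelPhase_isLittleO_rpow_atTop (hp : 0 < p) {X : ℂ} (hX : 0 < X.re)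
    (a : ℝ) : (fun τ => Complex.exp (-X * kratzelPhase p τ)) =o[atTop] (· ^ a) := by
  refine IsBigO.trans_isLittleO ?_
    (Real.exp_neg_mul_rpow_isLittleO_rpow_atTop (div_pos hX hp) hp a)
  refine IsBigO.of_bound' ?_
  filter_upwards [eventually_gt_atTop 0] with τ hτ
  rw [Complex.norm_exp_neg_mul_ofReal, Real.norm_of_nonneg (Real.exp_pos _).le]
  exact exp_neg_mul_kratzelPhase_le_rpow hX.le hτ

theorem cexp_neg_mul_kratzelPhase_isLittleO_rpow_nhdsGT_zero (hp : 0 < p) {X : ℂ}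
    (hX : 0 < X.re) (b : ℝ) :
    (fun τ => Complex.exp (-X * kratzelPhase p τ)) =o[𝓝[>] 0] (· ^ b) := by
  refine IsBigO.trans_isLittleO ?_ (Real.exp_neg_mul_inv_isLittleO_rpow_nhdsGT_zero hX b)
  refine IsBigO.of_bound' ?_
  filter_upwards [self_mem_nhdsWithin] with τ hτ
  rw [Complex.norm_exp_neg_mul_ofReal, Real.norm_of_nonneg (Real.exp_pos _).le]
  exact exp_neg_mul_kratzelPhase_le_inv hp hX.le hτ

theorem mellinConvergent_cexp_neg_mul_kratzelPhase (hp : 0 < p) {X : ℂ} (hX : 0 < X.re) (s : ℂ) :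
    MellinConvergent (fun τ => Complex.exp (-X * kratzelPhase p τ)) s := by
  have hcont : ContinuousOn (fun τ => Complex.exp (-X * kratzelPhase p τ)) (Ioi 0) :=
    (continuous_const.mul Complex.continuous_ofReal).cexp.comp_continuousOn
      (continuousOn_kratzelPhase p)
  exact mellinConvergent_of_isBigO_rpow (hcont.locallyIntegrableOn measurableSet_Ioi)
    (cexp_neg_mul_kratzelPhase_isLittleO_rpow_atTop hp hX _).isBigO (lt_add_one s.re)
    (cexp_neg_mul_kratzelPhase_isLittleO_rpow_nhdsGT_zero hp hX _).isBigO (sub_one_lt s.re)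

end KratzelPhase

/-- For `p > 0`, `ν ∈ ℂ`, with `ψ(τ) = τ^p/p + 1/τ`: the integrand
`τ ↦ τ^(ν-1) exp(-X ψ(τ))` is integrable on `(0,∞)` for every `X` with `Re X > 0`,
and `G(X) = ∫₀^∞ τ^(ν-1) exp(-X ψ(τ)) dτ` is holomorphic on that half-plane. -/
theorem kratzel_G_holomorphic (p : ℝ) (hp : 0 < p) (ν : ℂ)
    (ψ : ℝ → ℝ) (hψ : ∀ τ : ℝ, ψ τ = τ ^ p / p + 1 / τ) :
    (∀ X : ℂ, 0 < X.re →
      IntegrableOn (fun τ : ℝ => (τ : ℂ) ^ (ν - 1) * Complex.exp (-X * (ψ τ : ℂ))) (Ioi 0)) ∧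
    DifferentiableOn ℂ
      (fun X : ℂ => ∫ τ in Ioi (0 : ℝ), (τ : ℂ) ^ (ν - 1) * Complex.exp (-X * (ψ τ : ℂ)))
      {X : ℂ | 0 < X.re} := by
  obtain rfl : ψ = kratzelPhase p := funext hψ
  have hint (X : ℂ) (hX : 0 < X.re) : IntegrableOn
      (fun τ : ℝ => (τ : ℂ) ^ (ν - 1) * Complex.exp (-X * kratzelPhase p τ)) (Ioi 0) :=
    mellinConvergent_cexp_neg_mul_kratzelPhase hp hX ν
  have hψ_nonneg : ∀ᵐ τ ∂volume.restrict (Ioi (0 : ℝ)), 0 ≤ kratzelPhase p τ :=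
    ae_restrict_of_forall_mem measurableSet_Ioi fun τ hτ => (kratzelPhase_pos hp hτ).le
  refine ⟨hint, fun X hX => ?_⟩
  exact (hasDerivAt_integral_mul_cexp_neg_mul
    ((continuousOn_kratzelPhase p).aemeasurable measurableSet_Ioi) hψ_nonneg hint
    hX).differentiableAt.differentiableWithinAt
end

section
/- Let −1 ≤ p < 0 and let ν ∈ ℂ with Re(ν) < 0. Then, as x → +∞ through positive reals, F_{p,ν}(x) = Γ(−ν) x^ν − Γ(−p−ν) x^{ν+p} + O(x^{Re(ν)+2p}); i.e. the difference F_{p,ν}(x) − Γ(−ν)x^ν + Γ(−p−ν)x^{ν+p} is O(x^{Re(ν)+2p}) as x → +∞. -/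
/-!
`F_{p,ν}(x)` is the Mellin transform at `ν` of `t ↦ exp (-t ^ p) exp (-x / t)`, and the substitution
`t ↦ x / t` in Euler's integral shows that `t ↦ exp (-x / t)` has Mellin transform `Γ(-s) x ^ s` for
`Re s < 0`. Writing `exp (-t ^ p) = 1 - t ^ p + R` with `0 ≤ R ≤ t ^ (2p) / 2`, the first two terms
produce `Γ(-ν) x ^ ν - Γ(-p-ν) x ^ (ν+p)`, and the remainder is bounded in norm by
`½ ∫ t ^ (Re ν + 2p - 1) exp (-x / t) dt = ½ Γ(-Re ν - 2p) x ^ (Re ν + 2p)`.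
-/

open MeasureTheory Set Filter Asymptotics

theorem Real.exp_neg_le_one_sub_add_sq_div_two {u : ℝ} (hu : 0 ≤ u) :
    Real.exp (-u) ≤ 1 - u + u ^ 2 / 2 := by
  have hq : 0 ≤ 1 - u + u ^ 2 / 2 := by nlinarith [sq_nonneg (u - 1)]
  have hexp : Real.exp (-u) * Real.exp u = 1 := by rw [← Real.exp_add]; simp
  -- `(1 + u + u²/2)(1 - u + u²/2) = 1 + u⁴/4 ≥ 1` and `1 + u + u²/2 ≤ exp u`
  nlinarith [Real.quadratic_le_exp_of_nonneg hu, Real.exp_pos (-u),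
    mul_le_mul_of_nonneg_left (Real.quadratic_le_exp_of_nonneg hu) hq, pow_nonneg hu 4]

theorem Complex.norm_exp_neg_ofReal_sub_one_add_le {u : ℝ} (hu : 0 ≤ u) :
    ‖Complex.exp (-(u : ℂ)) - 1 + u‖ ≤ u ^ 2 / 2 := by
  have hreal : Complex.exp (-(u : ℂ)) - 1 + u = ((Real.exp (-u) - 1 + u : ℝ) : ℂ) := by
    push_cast; rfl
  rw [hreal, Complex.norm_real, Real.norm_of_nonneg (by linarith [Real.add_one_le_exp (-u)])]
  linarith [Real.exp_neg_le_one_sub_add_sq_div_two hu]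

theorem Complex.hasMellin_exp_neg_ofReal {s : ℂ} (hs : 0 < s.re) :
    HasMellin (fun u : ℝ => Complex.exp (-(u : ℂ))) s (Complex.Gamma s) := by
  have hfun : (fun u : ℝ => Complex.exp (-(u : ℂ))) = fun u : ℝ => ((Real.exp (-u) : ℝ) : ℂ) := by
    ext u; push_cast; rfl
  rw [hfun, Complex.Gamma_eq_integral hs, Complex.GammaIntegral_eq_mellin]
  refine ⟨?_, rfl⟩
  simpa only [MellinConvergent, smul_eq_mul, mul_comm] using Complex.GammaIntegral_convergent hs

theorem hasMellin_exp_neg_div {x : ℝ} (hx : 0 < x) {s : ℂ} (hs : s.re < 0) :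
    HasMellin (fun t : ℝ => Complex.exp (-((x / t : ℝ) : ℂ))) s
      (Complex.Gamma (-s) * (x : ℂ) ^ s) := by
  set e : ℝ → ℂ := fun u => Complex.exp (-(u : ℂ))
  obtain ⟨he_conv, he_val⟩ := Complex.hasMellin_exp_neg_ofReal (s := -s) (by simpa using hs)
  have hcomp : (fun t : ℝ => Complex.exp (-((x / t : ℝ) : ℂ))) = fun t => e (x * t ^ (-1 : ℝ)) := by
    ext t; simp [e, Real.rpow_neg_one, div_eq_mul_inv]
  have hdiv : s / ((-1 : ℝ) : ℂ) = -s := by push_cast; ring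
  rw [hcomp]
  refine ⟨?_, ?_⟩
  · rw [MellinConvergent.comp_rpow (f := fun u => e (x * u)) (by norm_num), hdiv,
      MellinConvergent.comp_mul_left hx]
    exact he_conv
  · rw [mellin_comp_rpow (fun u => e (x * u)), hdiv, mellin_comp_mul_left _ _ hx, he_val, neg_neg]
    simp [mul_comm]

theorem integrableOn_rpow_mul_exp_neg_div {x r : ℝ} (hx : 0 < x) (hr : r < 0) :
    IntegrableOn (fun t : ℝ => t ^ (r - 1) * Real.exp (-(x / t))) (Ioi 0) := by
  have h := (hasMellin_exp_neg_div hx (s := r) (by simpa using hr)).1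
  have hmeas : Measurable fun t : ℝ => Complex.exp (-((x / t : ℝ) : ℂ)) := by fun_prop
  rw [MellinConvergent, mellin_convergent_iff_norm subset_rfl measurableSet_Ioi
    hmeas.aestronglyMeasurable] at h
  simpa [Complex.norm_exp] using h

theorem integral_rpow_mul_exp_neg_div {x r : ℝ} (hx : 0 < x) (hr : r < 0) :
    ∫ t in Ioi 0, t ^ (r - 1) * Real.exp (-(x / t)) = Real.Gamma (-r) * x ^ r := by
  have h := (hasMellin_exp_neg_div hx (s := r) (by simpa using hr)).2
  apply Complex.ofReal_injective
  rw [← integral_complex_ofReal, Complex.ofReal_mul, Complex.ofReal_cpow hx.le,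
    ← Complex.Gamma_ofReal, Complex.ofReal_neg, ← h, mellin]
  refine setIntegral_congr_fun measurableSet_Ioi fun t ht => ?_
  simp [Complex.ofReal_cpow (le_of_lt ht), Complex.ofReal_exp]

theorem norm_mellin_le_integral {E : Type*} [NormedAddCommGroup E] [NormedSpace ℂ E]
    (f : ℝ → E) (s : ℂ) :
    ‖mellin f s‖ ≤ ∫ t in Ioi 0, t ^ (s.re - 1) * ‖f t‖ := by
  refine (norm_integral_le_integral_norm _).trans_eq
    (setIntegral_congr_fun measurableSet_Ioi fun t ht => ?_)
  simp [norm_smul, Complex.norm_cpow_eq_rpow_re_of_pos ht]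

noncomputable def kratzelRemainder (p x t : ℝ) : ℂ :=
  (Complex.exp (-((t ^ p : ℝ) : ℂ)) - 1 + ((t ^ p : ℝ) : ℂ)) * Complex.exp (-((x / t : ℝ) : ℂ))

section KratzelRemainder

variable {p x : ℝ}

theorem measurable_kratzelRemainder : Measurable (kratzelRemainder p x) := by
  unfold kratzelRemainder; fun_prop

theorem cexp_neg_rpow_sub_div_eq {t : ℝ} (ht : 0 < t) :
    Complex.exp (-((t ^ p : ℝ) : ℂ) - ((x / t : ℝ) : ℂ))
      = Complex.exp (-((x / t : ℝ) : ℂ)) - (t : ℂ) ^ (p : ℂ) • Complex.exp (-((x / t : ℝ) : ℂ))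
        + kratzelRemainder p x t := by
  rw [kratzelRemainder, sub_eq_add_neg _ ((x / t : ℝ) : ℂ), Complex.exp_add,
    ← Complex.ofReal_cpow ht.le, smul_eq_mul]
  ring

theorem rpow_mul_norm_kratzelRemainder_le (s : ℂ) {t : ℝ} (ht : 0 < t) :
    t ^ (s.re - 1) * ‖kratzelRemainder p x t‖
      ≤ 1 / 2 * (t ^ (s.re + 2 * p - 1) * Real.exp (-(x / t))) := by
  have htaylor := Complex.norm_exp_neg_ofReal_sub_one_add_le (Real.rpow_nonneg ht.le p)
  have hsq : (t ^ p) ^ 2 = t ^ (2 * p) := by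
    rw [← Real.rpow_natCast, ← Real.rpow_mul ht.le]; ring_nf
  have hpow : t ^ (s.re - 1) * t ^ (2 * p) = t ^ (s.re + 2 * p - 1) := by
    rw [← Real.rpow_add ht]; ring_nf
  calc t ^ (s.re - 1) * ‖kratzelRemainder p x t‖
      ≤ t ^ (s.re - 1) * ((t ^ p) ^ 2 / 2 * Real.exp (-(x / t))) := by
        have hexp : ‖Complex.exp (-((x / t : ℝ) : ℂ))‖ = Real.exp (-(x / t)) := by
          simp [Complex.norm_exp]
        rw [kratzelRemainder, norm_mul, hexp]
        gcongr
    _ = 1 / 2 * (t ^ (s.re + 2 * p - 1) * Real.exp (-(x / t))) := by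
        rw [hsq, ← hpow]; ring

theorem integrableOn_rpow_mul_norm_kratzelRemainder (hx : 0 < x) {s : ℂ}
    (hs : s.re + 2 * p < 0) :
    IntegrableOn (fun t : ℝ => t ^ (s.re - 1) * ‖kratzelRemainder p x t‖) (Ioi 0) := by
  refine ((integrableOn_rpow_mul_exp_neg_div hx hs).const_mul (1 / 2)).mono' ?_ ?_
  · exact ((measurable_id.pow_const _).mul measurable_kratzelRemainder.norm).aestronglyMeasurable
  · refine (ae_restrict_iff' measurableSet_Ioi).mpr (.of_forall fun t ht => ?_)
    rw [Real.norm_of_nonneg (mul_nonneg (Real.rpow_nonneg (le_of_lt ht) _) (norm_nonneg _))]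
    exact rpow_mul_norm_kratzelRemainder_le s ht

theorem mellinConvergent_kratzelRemainder (hx : 0 < x) {s : ℂ} (hs : s.re + 2 * p < 0) :
    MellinConvergent (kratzelRemainder p x) s := by
  rw [MellinConvergent, mellin_convergent_iff_norm subset_rfl measurableSet_Ioi
    measurable_kratzelRemainder.aestronglyMeasurable]
  exact integrableOn_rpow_mul_norm_kratzelRemainder hx hs

theorem norm_mellin_kratzelRemainder_le (hx : 0 < x) {s : ℂ} (hs : s.re + 2 * p < 0) :
    ‖mellin (kratzelRemainder p x) s‖
      ≤ Real.Gamma (-(s.re + 2 * p)) / 2 * x ^ (s.re + 2 * p) :=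
  calc ‖mellin (kratzelRemainder p x) s‖
      ≤ ∫ t in Ioi 0, t ^ (s.re - 1) * ‖kratzelRemainder p x t‖ := norm_mellin_le_integral _ _
    _ ≤ ∫ t in Ioi 0, 1 / 2 * (t ^ (s.re + 2 * p - 1) * Real.exp (-(x / t))) :=
        setIntegral_mono_on (integrableOn_rpow_mul_norm_kratzelRemainder hx hs)
          ((integrableOn_rpow_mul_exp_neg_div hx hs).const_mul _) measurableSet_Ioi
          fun t ht => rpow_mul_norm_kratzelRemainder_le s ht
    _ = Real.Gamma (-(s.re + 2 * p)) / 2 * x ^ (s.re + 2 * p) := by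
        rw [integral_const_mul, integral_rpow_mul_exp_neg_div hx hs]; ring

theorem kratzel_sub_leading_terms_eq_mellin (hx : 0 < x) {ν : ℂ} (hν : ν.re < 0)
    (hr : ν.re + 2 * p < 0) :
    (∫ t in Ioi (0 : ℝ), (t : ℂ) ^ (ν - 1)
          * Complex.exp (-((t ^ p : ℝ) : ℂ) - ((x / t : ℝ) : ℂ)))
        - Complex.Gamma (-ν) * (x : ℂ) ^ ν
        + Complex.Gamma (-(p : ℂ) - ν) * (x : ℂ) ^ (ν + p)
      = mellin (kratzelRemainder p x) ν := by
  set g : ℝ → ℂ := fun t => Complex.exp (-((x / t : ℝ) : ℂ))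
  obtain ⟨hg_conv, hg_val⟩ := hasMellin_exp_neg_div hx hν
  -- `Re (ν + p)` is the mean of `Re ν` and `Re ν + 2p`
  have hνp : (ν + p).re < 0 := by simp only [Complex.add_re, Complex.ofReal_re]; linarith
  obtain ⟨hgp_conv, hgp_val⟩ := hasMellin_exp_neg_div hx hνp
  have hlin := hasMellin_sub hg_conv (MellinConvergent.cpow_smul.mpr hgp_conv)
  have hsplit := hasMellin_add hlin.1 (mellinConvergent_kratzelRemainder hx hr)
  rw [hlin.2, mellin_cpow_smul, hg_val, hgp_val] at hsplit
  have hF : (∫ t in Ioi (0 : ℝ), (t : ℂ) ^ (ν - 1)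
      * Complex.exp (-((t ^ p : ℝ) : ℂ) - ((x / t : ℝ) : ℂ)))
      = mellin (fun t => g t - (t : ℂ) ^ (p : ℂ) • g t + kratzelRemainder p x t) ν :=
    setIntegral_congr_fun measurableSet_Ioi fun t ht => by rw [cexp_neg_rpow_sub_div_eq ht]; rfl
  rw [hF, hsplit.2, neg_add_rev, ← sub_eq_add_neg]
  ring

end KratzelRemainder

theorem kratzel_asymptotics_neg_p_general (p : ℝ) (hp₂ : p < 0)
    (ν : ℂ) (hν : ν.re < 0) :
    (fun x : ℝ =>
      (∫ t in Ioi (0 : ℝ), (t : ℂ) ^ (ν - 1)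
          * Complex.exp (-((t ^ p : ℝ) : ℂ) - ((x / t : ℝ) : ℂ)))
        - Complex.Gamma (-ν) * (x : ℂ) ^ ν
        + Complex.Gamma (-(p : ℂ) - ν) * (x : ℂ) ^ (ν + p))
      =O[atTop] (fun x : ℝ => x ^ (ν.re + 2 * p)) := by
  have hr : ν.re + 2 * p < 0 := by linarith
  refine isBigO_iff.mpr ⟨Real.Gamma (-(ν.re + 2 * p)) / 2, ?_⟩
  filter_upwards [eventually_gt_atTop 0] with x hx
  rw [kratzel_sub_leading_terms_eq_mellin hx hν hr, Real.norm_of_nonneg (by positivity)]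
  exact norm_mellin_kratzelRemainder_le hx hr

/-- For `-1 ≤ p < 0` and `Re ν < 0`, as `x → +∞`:
`F_{p,ν}(x) = Γ(-ν) x^ν - Γ(-p-ν) x^{ν+p} + O(x^{Re ν + 2p})`. -/
theorem kratzel_asymptotics_neg_p (p : ℝ) (hp₁ : -1 ≤ p) (hp₂ : p < 0)
    (ν : ℂ) (hν : ν.re < 0) :
    (fun x : ℝ =>
      (∫ t in Ioi (0 : ℝ), (t : ℂ) ^ (ν - 1)
          * Complex.exp (-((t ^ p : ℝ) : ℂ) - ((x / t : ℝ) : ℂ)))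
        - Complex.Gamma (-ν) * (x : ℂ) ^ ν
        + Complex.Gamma (-(p : ℂ) - ν) * (x : ℂ) ^ (ν + p))
      =O[atTop] (fun x : ℝ => x ^ (ν.re + 2 * p)) :=
  kratzel_asymptotics_neg_p_general p hp₂ ν hν
end

section
/- Let p > 0 and a > 0, and let τ_s be the unique solution in (1, ∞) of τ^{p+1} = 1 + aτ. For x > 0 set X = p^(1/(p+1)) x^(p/(p+1)), ν = 1 + aX, and φ''_s = ((p+1)/τ_s + ap)/τ_s². Then, as x → +∞, F_{p,ν}(x) = √(2π/(X φ''_s)) · (x/p)^(ν/(p+1)) · τ_s^{aX} · exp(−(p+1)X/(p τ_s) − aX/p) · (1 + o(1)), where ν varies with x as indicated. -/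
/-!
Substituting `t = (x / p) ^ (1 / (p + 1)) * τ` turns the integral into
`(x / p) ^ (ν / (p + 1)) * ∫ exp (-X φ(τ)) dτ` with `φ(τ) = τ ^ p / p + 1 / τ - a log τ`.
The phase `φ` decreases on `(0, τ_s]` and increases on `[τ_s, ∞)`, and `φ''(τ_s) = φ''_s`,
so Laplace's method gives `∫ exp (-X (φ(τ) - φ(τ_s))) dτ ~ √(2π / (X φ''_s))`; finally
`exp (-X φ(τ_s))` is exactly `τ_s ^ (aX) exp (-(p + 1) X / (p τ_s) - aX / p)`.
-/

open MeasureTheory Set Filter Topology Real Asymptotics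

section LaplaceMethod

variable {f f' : ℝ → ℝ} {s : Set ℝ} {x₀ M : ℝ}

theorem isLittleO_sub_sub_half_mul_sq (hf : ∀ᶠ x in 𝓝 x₀, HasDerivAt f (f' x) x)
    (hf'₀ : f' x₀ = 0) (hf' : HasDerivAt f' M x₀) :
    (fun x => f x - f x₀ - M / 2 * (x - x₀) ^ 2) =o[𝓝 x₀] fun x => (x - x₀) ^ 2 := by
  refine isLittleO_iff.2 fun ε hε => ?_
  obtain ⟨r, hr, hball⟩ :=
    Metric.eventually_nhds_iff_ball.1 (hf.and ((hasDerivAt_iff_isLittleO.1 hf').bound hε))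
  filter_upwards [Metric.ball_mem_nhds x₀ hr] with x hx
  have hsub : Metric.closedBall x₀ (dist x x₀) ⊆ Metric.ball x₀ r :=
    Metric.closedBall_subset_ball hx
  have hmvt := (convex_closedBall x₀ (dist x x₀)).norm_image_sub_le_of_norm_hasDerivWithin_le
    (f := fun y => f y - f x₀ - M / 2 * (y - x₀) ^ 2) (f' := fun y => f' y - M * (y - x₀))
    (C := ε * dist x x₀) (fun y hy => ?_) (fun y hy => ?_)
    (Metric.mem_closedBall_self dist_nonneg) (Metric.mem_closedBall.2 le_rfl)
  · simpa [Real.dist_eq, mul_assoc, ← sq] using hmvt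
  · have hsq : HasDerivAt (fun y => M / 2 * (y - x₀) ^ 2) (M * (y - x₀)) y :=
      ((((hasDerivAt_id y).sub_const x₀).pow 2).const_mul (M / 2)).congr_deriv (by simp; ring)
    exact (((hball y (hsub hy)).1.sub_const (f x₀)).sub hsq).hasDerivWithinAt
  · have hy' := (hball y (hsub hy)).2
    rw [hf'₀, sub_zero, smul_eq_mul, mul_comm] at hy'
    exact hy'.trans (by gcongr; exact hy)

theorem exists_pos_Icc_subset_and_abs_sub_le
    (hquad : (fun x => f x - f x₀ - M / 2 * (x - x₀) ^ 2) =o[𝓝 x₀] fun x => (x - x₀) ^ 2)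
    (hs : s ∈ 𝓝 x₀) {ε : ℝ} (hε : 0 < ε) :
    ∃ δ > 0, Icc (x₀ - δ) (x₀ + δ) ⊆ s ∧
      ∀ x ∈ Icc (x₀ - δ) (x₀ + δ),
        |f x - f x₀ - M / 2 * (x - x₀) ^ 2| ≤ ε * (x - x₀) ^ 2 := by
  obtain ⟨δ, hδ, h⟩ :=
    Metric.nhds_basis_closedBall.eventually_iff.1 ((hquad.bound hε).and hs)
  rw [Real.closedBall_eq_Icc] at h
  refine ⟨δ, hδ, fun x hx => (h hx).2, fun x hx => ?_⟩
  simpa [sq_abs] using (h hx).1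

theorem tendsto_sqrt_mul_intervalIntegral_exp_neg_mul_sq {k δ : ℝ} (hk : 0 < k) (hδ : 0 < δ)
    (x₀ : ℝ) :
    Tendsto (fun l => √l * ∫ x in (x₀ - δ)..(x₀ + δ), exp (-(l * k * (x - x₀) ^ 2)))
      atTop (𝓝 √(π / k)) := by
  have hlim : Tendsto (fun l => ∫ v in -(√l * δ)..√l * δ, exp (-k * v ^ 2))
      atTop (𝓝 √(π / k)) := by
    rw [← integral_gaussian]
    exact intervalIntegral_tendsto_integral (integrable_exp_neg_mul_sq hk)
      (tendsto_neg_atTop_atBot.comp (tendsto_sqrt_atTop.atTop_mul_const hδ))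
      (tendsto_sqrt_atTop.atTop_mul_const hδ)
  refine hlim.congr' ?_
  filter_upwards [eventually_ge_atTop 0] with l hl
  have hsub := intervalIntegral.smul_integral_comp_mul_sub (a := x₀ - δ) (b := x₀ + δ)
    (fun v => exp (-k * v ^ 2)) √l (√l * x₀)
  rw [show √l * (x₀ - δ) - √l * x₀ = -(√l * δ) by ring,
    show √l * (x₀ + δ) - √l * x₀ = √l * δ by ring, smul_eq_mul] at hsub
  rw [← hsub]
  congr 1
  refine intervalIntegral.integral_congr fun x _ => ?_
  rw [← mul_sub, mul_pow, sq_sqrt hl]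
  ring_nf

theorem setIntegral_exp_neg_mul_le (hs : MeasurableSet s) {k δ c l : ℝ} (hk : 0 < k)
    (hl : 1 ≤ l) (hnear : ∀ x ∈ s, |x - x₀| ≤ δ → k * (x - x₀) ^ 2 ≤ f x - f x₀)
    (hfar : ∀ x ∈ s, δ < |x - x₀| → c ≤ f x - f x₀)
    (hint : IntegrableOn (fun x => exp (-(f x - f x₀))) s) :
    ∫ x in s, exp (-(l * (f x - f x₀)))
      ≤ √(π / (l * k)) + exp (-((l - 1) * c)) * ∫ x in s, exp (-(f x - f x₀)) := by
  have hgauss : Integrable fun x => exp (-(l * k) * (x - x₀) ^ 2) :=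
    (integrable_exp_neg_mul_sq (by positivity)).comp_sub_right x₀
  have hpt : ∀ x ∈ s, exp (-(l * (f x - f x₀)))
      ≤ exp (-(l * k) * (x - x₀) ^ 2) + exp (-((l - 1) * c)) * exp (-(f x - f x₀)) := by
    intro x hx
    rcases le_or_gt |x - x₀| δ with h | h
    · have := hnear x hx h
      have : exp (-(l * (f x - f x₀))) ≤ exp (-(l * k) * (x - x₀) ^ 2) :=
        exp_le_exp.2 (by nlinarith)
      linarith [mul_pos (exp_pos (-((l - 1) * c))) (exp_pos (-(f x - f x₀)))]
    · have := hfar x hx h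
      have : exp (-(l * (f x - f x₀))) ≤ exp (-((l - 1) * c)) * exp (-(f x - f x₀)) := by
        rw [← exp_add]
        exact exp_le_exp.2 (by nlinarith)
      linarith [exp_pos (-(l * k) * (x - x₀) ^ 2)]
  calc ∫ x in s, exp (-(l * (f x - f x₀)))
      ≤ ∫ x in s, (exp (-(l * k) * (x - x₀) ^ 2)
          + exp (-((l - 1) * c)) * exp (-(f x - f x₀))) :=
        integral_mono_of_nonneg (Eventually.of_forall fun x => (exp_pos _).le)
          (hgauss.integrableOn.add (hint.const_mul _)) ((ae_restrict_iff' hs).2 (.of_forall hpt))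
    _ = (∫ x in s, exp (-(l * k) * (x - x₀) ^ 2))
          + exp (-((l - 1) * c)) * ∫ x in s, exp (-(f x - f x₀)) := by
        rw [integral_add hgauss.integrableOn (hint.const_mul _), integral_const_mul]
    _ ≤ (∫ x, exp (-(l * k) * (x - x₀) ^ 2))
          + exp (-((l - 1) * c)) * ∫ x in s, exp (-(f x - f x₀)) := by
        grw [setIntegral_le_integral hgauss (.of_forall fun x => (exp_pos _).le)]
    _ = √(π / (l * k)) + exp (-((l - 1) * c)) * ∫ x in s, exp (-(f x - f x₀)) := by
        rw [integral_sub_right_eq_self (fun x => exp (-(l * k) * x ^ 2)), integral_gaussian]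

theorem integrableOn_exp_neg_mul_sub (hs : MeasurableSet s)
    (hf : AEStronglyMeasurable f (volume.restrict s)) (hmin : IsMinOn f s x₀)
    (hint : IntegrableOn (fun x => exp (-(f x - f x₀))) s) {l : ℝ} (hl : 1 ≤ l) :
    IntegrableOn (fun x => exp (-(l * (f x - f x₀)))) s := by
  refine hint.mono' (continuous_exp.comp_aestronglyMeasurable
    (((hf.sub aestronglyMeasurable_const).const_mul l).neg)) ((ae_restrict_iff' hs).2 ?_)
  refine .of_forall fun x hx => ?_
  rw [norm_of_nonneg (exp_pos _).le]
  exact exp_le_exp.2 (by nlinarith [isMinOn_iff.1 hmin x hx])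

theorem intervalIntegral_exp_neg_mul_sq_le_setIntegral {k δ l : ℝ} (hδ : 0 ≤ δ)
    (hl : 0 ≤ l)
    (hsub : Icc (x₀ - δ) (x₀ + δ) ⊆ s)
    (hnear : ∀ x ∈ Icc (x₀ - δ) (x₀ + δ), f x - f x₀ ≤ k * (x - x₀) ^ 2)
    (hint : IntegrableOn (fun x => exp (-(l * (f x - f x₀)))) s) :
    ∫ x in (x₀ - δ)..(x₀ + δ), exp (-(l * k * (x - x₀) ^ 2))
      ≤ ∫ x in s, exp (-(l * (f x - f x₀))) := by
  rw [intervalIntegral.integral_of_le (by linarith)]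
  calc ∫ x in Ioc (x₀ - δ) (x₀ + δ), exp (-(l * k * (x - x₀) ^ 2))
      ≤ ∫ x in Ioc (x₀ - δ) (x₀ + δ), exp (-(l * (f x - f x₀))) :=
        setIntegral_mono_on ((by fun_prop : Continuous fun x =>
            exp (-(l * k * (x - x₀) ^ 2))).integrableOn_Icc.mono_set Ioc_subset_Icc_self)
          (hint.mono_set (Ioc_subset_Icc_self.trans hsub)) measurableSet_Ioc fun x hx =>
          exp_le_exp.2 (by nlinarith [hnear x (Ioc_subset_Icc_self hx)])
    _ ≤ ∫ x in s, exp (-(l * (f x - f x₀))) :=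
        setIntegral_mono_set hint (.of_forall fun x => (exp_pos _).le)
          (Ioc_subset_Icc_self.trans hsub).eventuallyLE

theorem isMinOn_of_isLittleO_of_sep (hx₀ : s ∈ 𝓝 x₀)
    (hquad : (fun x => f x - f x₀ - M / 2 * (x - x₀) ^ 2) =o[𝓝 x₀] fun x => (x - x₀) ^ 2)
    (hM : 0 < M)
    (hsep : ∀ δ > 0, ∃ c > 0, ∀ x ∈ s, δ < |x - x₀| → c ≤ f x - f x₀) :
    IsMinOn f s x₀ := by
  obtain ⟨δ, hδ, -, hnear⟩ := exists_pos_Icc_subset_and_abs_sub_le hquad hx₀ (half_pos hM)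
  obtain ⟨c, hc, hfar⟩ := hsep δ hδ
  refine isMinOn_iff.2 fun x hx => ?_
  rcases le_or_gt |x - x₀| δ with h | h
  · linarith [(abs_le.1 (hnear x (mem_Icc_iff_abs_le.1 ((abs_sub_comm x₀ x).trans_le h)))).1]
  · linarith [hfar x hx h]

theorem eventually_lt_sqrt_mul_setIntegral_exp_neg_mul (hs : MeasurableSet s)
    (hx₀ : s ∈ 𝓝 x₀)
    (hf : AEStronglyMeasurable f (volume.restrict s))
    (hquad : (fun x => f x - f x₀ - M / 2 * (x - x₀) ^ 2) =o[𝓝 x₀] fun x => (x - x₀) ^ 2)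
    (hM : 0 < M) (hmin : IsMinOn f s x₀) (hint : IntegrableOn (fun x => exp (-(f x - f x₀))) s)
    {b : ℝ} (hb : b < √(2 * π / M)) :
    ∀ᶠ l in atTop, b < √l * ∫ x in s, exp (-(l * (f x - f x₀))) := by
  rw [show 2 * π / M = π / (M / 2) by field_simp] at hb
  have hcont : ContinuousAt (fun k => √(π / k)) (M / 2) :=
    (continuousAt_const.div continuousAt_id (half_pos hM).ne').sqrt
  obtain ⟨k, hbk, hMk⟩ := (((hcont.eventually (lt_mem_nhds hb)).filter_mono
    nhdsWithin_le_nhds).and self_mem_nhdsWithin).exists (f := 𝓝[>] (M / 2))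
  obtain ⟨δ, hδ, hsub, hnear⟩ :=
    exists_pos_Icc_subset_and_abs_sub_le hquad hx₀ (sub_pos.2 (mem_Ioi.1 hMk))
  filter_upwards [(tendsto_sqrt_mul_intervalIntegral_exp_neg_mul_sq
      ((half_pos hM).trans hMk) hδ x₀).eventually (lt_mem_nhds hbk),
    eventually_ge_atTop 1] with l hl hl₁
  refine hl.trans_le (mul_le_mul_of_nonneg_left ?_ (sqrt_nonneg l))
  exact intervalIntegral_exp_neg_mul_sq_le_setIntegral hδ.le (by linarith) hsub
    (fun x hx => by linarith [(abs_le.1 (hnear x hx)).2])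
    (integrableOn_exp_neg_mul_sub hs hf hmin hint hl₁)

theorem eventually_sqrt_mul_setIntegral_exp_neg_mul_lt (hs : MeasurableSet s)
    (hx₀ : s ∈ 𝓝 x₀)
    (hquad : (fun x => f x - f x₀ - M / 2 * (x - x₀) ^ 2) =o[𝓝 x₀] fun x => (x - x₀) ^ 2)
    (hM : 0 < M) (hsep : ∀ δ > 0, ∃ c > 0, ∀ x ∈ s, δ < |x - x₀| → c ≤ f x - f x₀)
    (hint : IntegrableOn (fun x => exp (-(f x - f x₀))) s) {b : ℝ} (hb : √(2 * π / M) < b) :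
    ∀ᶠ l in atTop, √l * ∫ x in s, exp (-(l * (f x - f x₀))) < b := by
  rw [show 2 * π / M = π / (M / 2) by field_simp] at hb
  have hcont : ContinuousAt (fun k => √(π / k)) (M / 2) :=
    (continuousAt_const.div continuousAt_id (half_pos hM).ne').sqrt
  obtain ⟨k, ⟨hbk, hk⟩, hkM⟩ := ((((hcont.eventually (gt_mem_nhds hb)).and
    (Ioi_mem_nhds (half_pos hM))).filter_mono nhdsWithin_le_nhds).and
    self_mem_nhdsWithin).exists (f := 𝓝[<] (M / 2))
  obtain ⟨δ, hδ, -, hnear⟩ :=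
    exists_pos_Icc_subset_and_abs_sub_le hquad hx₀ (sub_pos.2 (mem_Iio.1 hkM))
  obtain ⟨c, hc, hfar⟩ := hsep δ hδ
  set K := ∫ x in s, exp (-(f x - f x₀))
  have hbound : Tendsto (fun l => √l * (√(π / (l * k)) + exp (-((l - 1) * c)) * K))
      atTop (𝓝 √(π / k)) := by
    have h := ((tendsto_rpow_mul_exp_neg_mul_atTop_nhds_zero (1 / 2) c hc).const_mul
      (exp c * K)).const_add √(π / k)
    rw [mul_zero, add_zero] at h
    refine h.congr' ?_
    filter_upwards [eventually_gt_atTop 0] with l hl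
    rw [mul_add, ← sqrt_mul hl.le, sqrt_eq_rpow l, show l * (π / (l * k)) = π / k by field_simp,
      show -((l - 1) * c) = c + -c * l by ring, exp_add]
    ring
  filter_upwards [hbound.eventually (gt_mem_nhds hbk), eventually_ge_atTop 1] with l hl hl₁
  refine (mul_le_mul_of_nonneg_left ?_ (sqrt_nonneg l)).trans_lt hl
  exact setIntegral_exp_neg_mul_le hs (mem_Ioi.1 hk) hl₁
    (fun x _ h => by
      linarith [(abs_le.1 (hnear x (mem_Icc_iff_abs_le.1 ((abs_sub_comm x₀ x).trans_le h)))).1])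
    hfar hint

theorem tendsto_sqrt_mul_setIntegral_exp_neg_mul (hs : MeasurableSet s) (hx₀ : s ∈ 𝓝 x₀)
    (hf : AEStronglyMeasurable f (volume.restrict s))
    (hquad : (fun x => f x - f x₀ - M / 2 * (x - x₀) ^ 2) =o[𝓝 x₀] fun x => (x - x₀) ^ 2)
    (hM : 0 < M) (hsep : ∀ δ > 0, ∃ c > 0, ∀ x ∈ s, δ < |x - x₀| → c ≤ f x - f x₀)
    (hint : IntegrableOn (fun x => exp (-(f x - f x₀))) s) :
    Tendsto (fun l => √l * ∫ x in s, exp (-(l * (f x - f x₀))))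
      atTop (𝓝 √(2 * π / M)) :=
  tendsto_order.2 ⟨fun _ hb => eventually_lt_sqrt_mul_setIntegral_exp_neg_mul hs hx₀ hf hquad hM
      (isMinOn_of_isLittleO_of_sep hx₀ hquad hM hsep) hint hb,
    fun _ hb => eventually_sqrt_mul_setIntegral_exp_neg_mul_lt hs hx₀ hquad hM hsep hint hb⟩

end LaplaceMethod

namespace Kratzel

noncomputable def phase (p a τ : ℝ) : ℝ := τ ^ p / p + τ⁻¹ - a * log τ

noncomputable def phaseDeriv (p a τ : ℝ) : ℝ := (τ ^ p - τ⁻¹ - a) / τ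

variable {p a τ τs : ℝ}

theorem hasDerivAt_phase (hp : p ≠ 0) (hτ : 0 < τ) :
    HasDerivAt (phase p a) (phaseDeriv p a τ) τ := by
  refine ((((hasDerivAt_rpow_const (p := p) (Or.inl hτ.ne')).div_const p).add
    (hasDerivAt_inv hτ.ne')).sub ((hasDerivAt_log hτ.ne').const_mul a)).congr_deriv ?_
  rw [phaseDeriv, rpow_sub_one hτ.ne']
  field_simp
  ring

theorem rpow_sub_inv_eq_of_rpow_add_one_eq (hτs : 0 < τs) (hcrit : τs ^ (p + 1) = 1 + a * τs) :
    τs ^ p - τs⁻¹ = a := by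
  rw [rpow_add_one hτs.ne'] at hcrit
  field_simp
  linarith

theorem rpow_sub_inv_lt_rpow_sub_inv (hp : 0 < p) {x y : ℝ} (hx : 0 < x) (hxy : x < y) :
    x ^ p - x⁻¹ < y ^ p - y⁻¹ :=
  sub_lt_sub (rpow_lt_rpow hx.le hxy hp) ((inv_lt_inv₀ (hx.trans hxy) hx).2 hxy)

theorem phaseDeriv_neg (hp : 0 < p) (hτs : 0 < τs) (hcrit : τs ^ (p + 1) = 1 + a * τs)
    (hτ : 0 < τ) (hlt : τ < τs) : phaseDeriv p a τ < 0 := by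
  have := rpow_sub_inv_lt_rpow_sub_inv hp hτ hlt
  have := rpow_sub_inv_eq_of_rpow_add_one_eq hτs hcrit
  exact div_neg_of_neg_of_pos (by linarith) hτ

theorem phaseDeriv_pos (hp : 0 < p) (hτs : 0 < τs) (hcrit : τs ^ (p + 1) = 1 + a * τs)
    (hlt : τs < τ) : 0 < phaseDeriv p a τ := by
  have := rpow_sub_inv_lt_rpow_sub_inv hp hτs hlt
  have := rpow_sub_inv_eq_of_rpow_add_one_eq hτs hcrit
  exact div_pos (by linarith) (hτs.trans hlt)

theorem continuousOn_phase (hp : p ≠ 0) : ContinuousOn (phase p a) (Ioi 0) :=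
  fun _ hτ => (hasDerivAt_phase hp hτ).continuousAt.continuousWithinAt

theorem strictAntiOn_phase (hp : 0 < p) (hτs : 0 < τs) (hcrit : τs ^ (p + 1) = 1 + a * τs) :
    StrictAntiOn (phase p a) (Ioc 0 τs) := by
  refine strictAntiOn_of_deriv_neg (convex_Ioc 0 τs)
    ((continuousOn_phase hp.ne').mono Ioc_subset_Ioi_self) fun τ hτ => ?_
  rw [interior_Ioc] at hτ
  rw [(hasDerivAt_phase hp.ne' hτ.1).deriv]
  exact phaseDeriv_neg hp hτs hcrit hτ.1 hτ.2

theorem strictMonoOn_phase (hp : 0 < p) (hτs : 0 < τs) (hcrit : τs ^ (p + 1) = 1 + a * τs) :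
    StrictMonoOn (phase p a) (Ici τs) := by
  refine strictMonoOn_of_deriv_pos (convex_Ici τs)
    ((continuousOn_phase hp.ne').mono fun τ hτ => hτs.trans_le hτ) fun τ hτ => ?_
  rw [interior_Ici] at hτ
  rw [(hasDerivAt_phase hp.ne' (hτs.trans hτ)).deriv]
  exact phaseDeriv_pos hp hτs hcrit hτ

theorem exists_pos_le_phase_sub (hp : 0 < p) (hτs : 0 < τs)
    (hcrit : τs ^ (p + 1) = 1 + a * τs) {δ : ℝ} (hδ : 0 < δ) :
    ∃ c > 0, ∀ τ ∈ Ioi 0, δ < |τ - τs| → c ≤ phase p a τ - phase p a τs := by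
  -- `τs - δ` may lie outside the domain, so the left tail is cut at `τs - δ'` instead.
  set δ' := min δ (τs / 2)
  have hδ' : 0 < δ' := lt_min hδ (half_pos hτs)
  have hleft : 0 < τs - δ' := by linarith [min_le_right δ (τs / 2)]
  have hlo : phase p a τs < phase p a (τs - δ') :=
    strictAntiOn_phase hp hτs hcrit ⟨hleft, by linarith⟩ ⟨hτs, le_rfl⟩ (by linarith)
  have hhi : phase p a τs < phase p a (τs + δ) :=
    strictMonoOn_phase hp hτs hcrit (mem_Ici.2 le_rfl) (mem_Ici.2 (by linarith)) (by linarith)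
  refine ⟨min (phase p a (τs - δ') - phase p a τs) (phase p a (τs + δ) - phase p a τs),
    lt_min (sub_pos.2 hlo) (sub_pos.2 hhi), fun τ (hτ : 0 < τ) h => ?_⟩
  rcases lt_abs.1 h with h | h
  · have := strictMonoOn_phase hp hτs hcrit (mem_Ici.2 (by linarith)) (mem_Ici.2 (by linarith))
      (by linarith : τs + δ < τ)
    exact (min_le_right _ _).trans (by linarith)
  · have := strictAntiOn_phase hp hτs hcrit ⟨hτ, by linarith⟩ ⟨hleft, by linarith⟩
      (by linarith [min_le_left δ (τs / 2)] : τ < τs - δ')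
    exact (min_le_left _ _).trans (by linarith)

theorem hasDerivAt_phaseDeriv (hτs : 0 < τs) (hcrit : τs ^ (p + 1) = 1 + a * τs) :
    HasDerivAt (phaseDeriv p a) (((p + 1) / τs + a * p) / τs ^ 2) τs := by
  have hroot := rpow_sub_inv_eq_of_rpow_add_one_eq hτs hcrit
  refine ((((hasDerivAt_rpow_const (p := p) (Or.inl hτs.ne')).sub
    (hasDerivAt_inv hτs.ne')).sub_const a).div (hasDerivAt_id τs) hτs.ne').congr_deriv ?_
  simp only [Pi.sub_apply, id]
  rw [rpow_sub_one hτs.ne', show τs ^ p = a + τs⁻¹ by linarith]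
  field_simp
  ring

theorem integrableOn_exp_neg_phase_sub (hp : 0 < p) (ha : -1 < a) (τs : ℝ) :
    IntegrableOn (fun τ => exp (-(phase p a τ - phase p a τs))) (Ioi 0) := by
  refine ((integrableOn_rpow_mul_exp_neg_mul_rpow ha hp (inv_pos.2 hp)).const_mul
    (exp (phase p a τs))).mono' ?_ ((ae_restrict_iff' measurableSet_Ioi).2 (.of_forall ?_))
  · exact ((continuousOn_phase hp.ne').sub continuousOn_const).neg.rexp.aestronglyMeasurable
      measurableSet_Ioi
  intro τ (hτ : 0 < τ)
  rw [norm_of_nonneg (exp_pos _).le]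
  calc exp (-(phase p a τ - phase p a τs))
      = exp (phase p a τs) * (τ ^ a * exp (-p⁻¹ * τ ^ p) * exp (-τ⁻¹)) := by
        rw [phase, rpow_def_of_pos hτ a, ← exp_add, ← exp_add, ← exp_add]
        ring_nf
    _ ≤ exp (phase p a τs) * (τ ^ a * exp (-p⁻¹ * τ ^ p)) :=
        mul_le_mul_of_nonneg_left (mul_le_of_le_one_right (by positivity)
          (exp_le_one_iff.2 (neg_nonpos.2 (inv_pos.2 hτ).le))) (exp_pos _).le

theorem tendsto_sqrt_mul_integral_exp_neg_phase_sub (hp : 0 < p) (ha : 0 ≤ a) (hτs : 0 < τs)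
    (hcrit : τs ^ (p + 1) = 1 + a * τs) :
    Tendsto (fun l => √l * ∫ τ in Ioi 0, exp (-(l * (phase p a τ - phase p a τs))))
      atTop (𝓝 √(2 * π / (((p + 1) / τs + a * p) / τs ^ 2))) :=
  tendsto_sqrt_mul_setIntegral_exp_neg_mul measurableSet_Ioi (Ioi_mem_nhds hτs)
    ((continuousOn_phase hp.ne').aestronglyMeasurable measurableSet_Ioi)
    (isLittleO_sub_sub_half_mul_sq
      (eventually_of_mem (Ioi_mem_nhds hτs) fun _ hτ => hasDerivAt_phase hp.ne' hτ)
      (by rw [phaseDeriv, rpow_sub_inv_eq_of_rpow_add_one_eq hτs hcrit, sub_self, zero_div])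
      (hasDerivAt_phaseDeriv hτs hcrit))
    (by positivity) (fun _ hδ => exists_pos_le_phase_sub hp hτs hcrit hδ)
    (integrableOn_exp_neg_phase_sub hp (by linarith) τs)

theorem integral_rpow_mul_exp_neg_mul_eq (X τs : ℝ) :
    ∫ τ in Ioi 0, τ ^ (a * X) * exp (-(X * (τ ^ p / p + τ⁻¹)))
      = exp (-(X * phase p a τs))
        * ∫ τ in Ioi 0, exp (-(X * (phase p a τ - phase p a τs))) := by
  rw [← integral_const_mul]
  refine setIntegral_congr_fun measurableSet_Ioi fun τ (hτ : 0 < τ) => ?_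
  rw [rpow_def_of_pos hτ, ← exp_add, ← exp_add]
  unfold phase
  ring_nf

theorem rpow_mul_exp_eq_exp_neg_mul_phase (hp : p ≠ 0) (hτs : 0 < τs)
    (hcrit : τs ^ (p + 1) = 1 + a * τs) (X : ℝ) :
    τs ^ (a * X) * exp (-(p + 1) * X / (p * τs) - a * X / p) = exp (-(X * phase p a τs)) := by
  rw [rpow_def_of_pos hτs, ← exp_add, phase,
    show τs ^ p = a + τs⁻¹ by linarith [rpow_sub_inv_eq_of_rpow_add_one_eq hτs hcrit]]
  field_simp
  ring_nf

theorem integral_rpow_mul_exp_neg_rpow_sub_div_eq (hp : 0 < p) {x : ℝ} (hx : 0 < x) (ν : ℝ) :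
    ∫ t in Ioi 0, t ^ (ν - 1) * exp (-(t ^ p) - x / t)
      = (x / p) ^ (ν / (p + 1)) * ∫ τ in Ioi 0,
          τ ^ (ν - 1)
            * exp (-(p ^ (1 / (p + 1)) * x ^ (p / (p + 1)) * (τ ^ p / p + τ⁻¹))) := by
  set c := (x / p) ^ (1 / (p + 1)) with hc_def
  have hc : 0 < c := by positivity
  have hcp : c ^ p * c = x / p := by
    rw [← rpow_add_one hc.ne', hc_def, ← rpow_mul (by positivity),
      one_div_mul_cancel (by linarith), rpow_one]
  have hxc : x / c = p ^ (1 / (p + 1)) * x ^ (p / (p + 1)) := by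
    rw [hc_def, div_rpow hx.le hp.le, show p / (p + 1) = 1 - 1 / (p + 1) by field_simp; ring,
      rpow_sub hx, rpow_one]
    field_simp
  have hcν : (x / p) ^ (ν / (p + 1)) = c * c ^ (ν - 1) := by
    rw [rpow_sub_one hc.ne', mul_div_cancel₀ _ hc.ne', hc_def, ← rpow_mul (by positivity)]
    ring_nf
  have hsubst := integral_comp_mul_left_Ioi'
    (fun t : ℝ => t ^ (ν - 1) * exp (-(t ^ p) - x / t)) 0 hc
  rw [mul_zero] at hsubst
  rw [← hsubst, smul_eq_mul, hcν, mul_assoc, ← hxc]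
  congr 1
  rw [← integral_const_mul]
  refine setIntegral_congr_fun measurableSet_Ioi fun τ (hτ : 0 < τ) => ?_
  rw [mul_rpow hc.le hτ.le, mul_rpow hc.le hτ.le, eq_div_of_mul_eq hc.ne' hcp]
  field_simp
  ring_nf

end Kratzel

open Kratzel

/-- Uniform asymptotics of Krätzel's integral when `ν = 1 + aX` grows with `x`:
for `p > 0`, `a > 0`, with `τ_s ∈ (1,∞)` the root of `τ^{p+1} = 1 + aτ`,
`X = p^(1/(p+1)) x^(p/(p+1))` and `φ''_s = ((p+1)/τ_s + ap)/τ_s²`, one has, as `x → +∞`,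
`F_{p,1+aX}(x) ~ √(2π/(X φ''_s)) (x/p)^((1+aX)/(p+1)) τ_s^{aX} exp(-(p+1)X/(pτ_s) - aX/p)`. -/
theorem kratzel_large_nu_asymptotics (p : ℝ) (hp : 0 < p) (a : ℝ) (ha : 0 < a)
    (τs : ℝ) (hτs₁ : τs ∈ Ioi (1 : ℝ)) (hτs₂ : τs ^ (p + 1) = 1 + a * τs)
    (X : ℝ → ℝ) (hX : ∀ x : ℝ, X x = p ^ (1 / (p + 1)) * x ^ (p / (p + 1)))
    (ν : ℝ → ℝ) (hν : ∀ x : ℝ, ν x = 1 + a * X x)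
    (φs'' : ℝ) (hφs'' : φs'' = ((p + 1) / τs + a * p) / τs ^ 2) :
    Tendsto (fun x : ℝ =>
      (∫ t in Ioi (0 : ℝ), t ^ (ν x - 1) * Real.exp (-(t ^ p) - x / t))
        / (Real.sqrt (2 * Real.pi / (X x * φs''))
            * (x / p) ^ (ν x / (p + 1))
            * τs ^ (a * X x)
            * Real.exp (-(p + 1) * X x / (p * τs) - a * X x / p)))
      atTop (nhds 1) := by
  have hτs : 0 < τs := zero_lt_one.trans hτs₁
  have hφs : 0 < φs'' := by rw [hφs'']; positivity
  have hXlim : Tendsto X atTop atTop := by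
    rw [funext hX]
    exact (tendsto_rpow_atTop (by positivity)).const_mul_atTop (by positivity)
  have hlim := ((tendsto_sqrt_mul_integral_exp_neg_phase_sub hp ha.le hτs hτs₂).comp
    hXlim).div_const √(2 * π / φs'')
  rw [← hφs'', div_self (by positivity)] at hlim
  refine hlim.congr' ?_
  filter_upwards [eventually_gt_atTop 0] with x hx
  rw [Function.comp_apply, integral_rpow_mul_exp_neg_rpow_sub_div_eq hp hx, ← hX, hν,
    add_sub_cancel_left, integral_rpow_mul_exp_neg_mul_eq (X x) τs, mul_assoc _ (τs ^ _),
    rpow_mul_exp_eq_exp_neg_mul_phase hp.ne' hτs hτs₂,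
    show 2 * π / (X x * φs'') = 2 * π / φs'' / X x by ring,
    sqrt_div (by positivity : 0 ≤ 2 * π / φs'') (X x)]
  field_simp
end

section
/- Let p > 0, a, b ∈ ℝ, and define J(a,b;z) = ∫₀^1 t^a (1−t)^b e^{zt} exp(−p/(t(1−t))) dt for z ∈ ℂ. Then the integral converges absolutely for every z ∈ ℂ and satisfies the Kummer-type transformation J(a,b;z) = e^z · J(b,a;−z). -/
/-!
Since `1/(t(1-t)) = 1/t + 1/(1-t)`, the damping factor splits as `exp(-p/t) · exp(-p/(1-t))`, and
`exp(-p/t) ≤ n! tⁿ / pⁿ` beats any power `t^a` on `(0,1]`; so the integrand is bounded on `(0,1)`,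
hence integrable. The Kummer transformation is the substitution `t ↦ 1 - t`, which swaps the roles
of `a` and `b` and turns `e^{zt}` into `e^z e^{-zt}`.
-/

open MeasureTheory Set

open Nat in
theorem exists_rpow_mul_exp_neg_div_le (p a : ℝ) (hp : 0 < p) :
    ∃ C, ∀ t ∈ Ioc (0 : ℝ) 1, t ^ a * Real.exp (-p / t) ≤ C := by
  set n := ⌈-a⌉₊
  refine ⟨n ! / p ^ n, fun t ⟨ht0, ht1⟩ => ?_⟩
  have hexp : Real.exp (-p / t) ≤ n ! / p ^ n * t ^ n :=
    calc Real.exp (-p / t) = (Real.exp (p / t))⁻¹ := by rw [neg_div, Real.exp_neg]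
      _ ≤ ((p / t) ^ n / n !)⁻¹ :=
          inv_anti₀ (by positivity) (Real.pow_div_factorial_le_exp _ (by positivity) n)
      _ = n ! / p ^ n * t ^ n := by rw [div_pow]; field_simp
  calc t ^ a * Real.exp (-p / t) ≤ t ^ a * (n ! / p ^ n * t ^ n) := by gcongr
    _ = n ! / p ^ n * t ^ (a + n) := by
        rw [Real.rpow_add ht0, Real.rpow_natCast]; ring
    _ ≤ n ! / p ^ n := by
        refine mul_le_of_le_one_right (by positivity) (Real.rpow_le_one ht0.le ht1 ?_)
        linarith [Nat.le_ceil (-a)]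

theorem integral_Ioo_zero_one_comp_one_sub {E : Type*} [NormedAddCommGroup E] [NormedSpace ℝ E]
    (f : ℝ → E) : ∫ t in Ioo (0 : ℝ) 1, f (1 - t) = ∫ t in Ioo (0 : ℝ) 1, f t := by
  simp only [← integral_Ioc_eq_integral_Ioo, ← intervalIntegral.integral_of_le zero_le_one]
  simp [intervalIntegral.integral_comp_sub_left f 1]

noncomputable def extendedConfluentIntegrand (p a b : ℝ) (z : ℂ) (t : ℝ) : ℂ :=
  ((t ^ a * (1 - t) ^ b : ℝ) : ℂ) * Complex.exp (z * t) * (Real.exp (-p / (t * (1 - t))) : ℂ)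

namespace extendedConfluentIntegrand

variable (p a b : ℝ) (z : ℂ)

theorem continuousOn : ContinuousOn (extendedConfluentIntegrand p a b z) (Ioo 0 1) := by
  intro t ⟨ht0, ht1⟩
  have : t ≠ 0 := ht0.ne'
  have : 1 - t ≠ 0 := (sub_pos.2 ht1).ne'
  unfold extendedConfluentIntegrand
  fun_prop (disch := first | assumption | (left; assumption) | exact mul_ne_zero ‹_› ‹_›)

theorem exists_norm_le (hp : 0 < p) :
    ∃ C, ∀ t ∈ Ioo (0 : ℝ) 1, ‖extendedConfluentIntegrand p a b z t‖ ≤ C := by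
  obtain ⟨A, hA⟩ := exists_rpow_mul_exp_neg_div_le p a hp
  obtain ⟨B, hB⟩ := exists_rpow_mul_exp_neg_div_le p b hp
  refine ⟨A * B * Real.exp ‖z‖, fun t ⟨ht0, ht1⟩ => ?_⟩
  have h1t : 0 < 1 - t := sub_pos.2 ht1
  have hsplit : Real.exp (-p / (t * (1 - t))) = Real.exp (-p / t) * Real.exp (-p / (1 - t)) := by
    rw [← Real.exp_add]; congr 1; field_simp; ring
  have hexp : ‖Complex.exp (z * t)‖ ≤ Real.exp ‖z‖ := by
    refine (Complex.norm_exp_le_exp_norm _).trans (Real.exp_le_exp.2 ?_)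
    rw [norm_mul, Complex.norm_real, Real.norm_of_nonneg ht0.le]
    exact mul_le_of_le_one_right (norm_nonneg z) ht1.le
  have hA' := hA t ⟨ht0, ht1.le⟩
  have hB' := hB (1 - t) ⟨h1t, by linarith⟩
  calc ‖extendedConfluentIntegrand p a b z t‖
      = (t ^ a * Real.exp (-p / t)) * ((1 - t) ^ b * Real.exp (-p / (1 - t)))
          * ‖Complex.exp (z * t)‖ := by
        rw [extendedConfluentIntegrand, norm_mul, norm_mul, Complex.norm_real, Complex.norm_real,
          Real.norm_of_nonneg (by positivity), Real.norm_of_nonneg (by positivity), hsplit]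
        ring
    _ ≤ A * B * Real.exp ‖z‖ := by
        have : 0 ≤ A := le_trans (by positivity) hA'
        have : 0 ≤ B := le_trans (by positivity) hB'
        gcongr

theorem integrableOn (hp : 0 < p) :
    IntegrableOn (extendedConfluentIntegrand p a b z) (Ioo 0 1) := by
  obtain ⟨C, hC⟩ := exists_norm_le p a b z hp
  exact .of_bound measure_Ioo_lt_top
    ((continuousOn p a b z).aestronglyMeasurable measurableSet_Ioo) C
    (ae_restrict_of_forall_mem measurableSet_Ioo hC)

theorem comp_one_sub (t : ℝ) :
    extendedConfluentIntegrand p a b z (1 - t)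
      = Complex.exp z * extendedConfluentIntegrand p b a (-z) t := by
  simp only [extendedConfluentIntegrand, sub_sub_cancel, mul_comm (1 - t) t]
  rw [show z * ((1 - t : ℝ) : ℂ) = z + -z * t by push_cast; ring, Complex.exp_add]
  push_cast
  ring

theorem integral_eq_exp_mul_integral :
    ∫ t in Ioo (0 : ℝ) 1, extendedConfluentIntegrand p a b z t
      = Complex.exp z * ∫ t in Ioo (0 : ℝ) 1, extendedConfluentIntegrand p b a (-z) t := by
  rw [← integral_Ioo_zero_one_comp_one_sub, ← integral_const_mul]
  simp only [comp_one_sub]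

end extendedConfluentIntegrand

/-- The integral `J(a,b;z) = ∫₀^1 t^a (1-t)^b e^{zt} exp(-p/(t(1-t))) dt`
converges absolutely for every `z ∈ ℂ` and satisfies `J(a,b;z) = e^z J(b,a;-z)`. -/
theorem extended_confluent_integral (p : ℝ) (hp : 0 < p) (a b : ℝ)
    (J : ℝ → ℝ → ℂ → ℂ)
    (hJ : ∀ a' b' : ℝ, ∀ z : ℂ, J a' b' z
      = ∫ t in Ioo (0 : ℝ) 1, ((t ^ a' * (1 - t) ^ b' : ℝ) : ℂ)
          * Complex.exp (z * t) * (Real.exp (-p / (t * (1 - t))) : ℂ)) :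
    (∀ z : ℂ, IntegrableOn
      (fun t : ℝ => ((t ^ a * (1 - t) ^ b : ℝ) : ℂ)
          * Complex.exp (z * t) * (Real.exp (-p / (t * (1 - t))) : ℂ)) (Ioo 0 1)) ∧
    (∀ z : ℂ, J a b z = Complex.exp z * J b a (-z)) := by
  refine ⟨fun z => extendedConfluentIntegrand.integrableOn p a b z hp, fun z => ?_⟩
  simp only [hJ]
  exact extendedConfluentIntegrand.integral_eq_exp_mul_integral p a b z
end
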